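/- arXiv:1405.3469 — 4 statements merged into one kernel-verified Lean document; each statement's English description precedes it below -/
import Mathlib

section
/- Let v : ℝ³ → ℝ³ be a C² vector field with div v = 0, and suppose there is a C² function P : ℝ³ → ℝ with v × curl v = ∇P on ℝ³. Then the vector fields v and curl v commute: (curl v·∇)v − (v·∇)(curl v) = 0 at every point of ℝ³, i.e. the Lie bracket [curl v, v] vanishes. -/
/-!
The vector identity curl (a × b) = a div b − b div a + (b·∇)a − (a·∇)b, applied to a = v and
b = curl v, has both divergences vanishing (div v = 0 by assumption, div curl = 0 by symmetry of
second derivatives), so its right-hand side is the bracket [curl v, v]. Its left-hand side is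
curl ∇P, which vanishes, again by symmetry of second derivatives.
-/

open scoped BigOperators

/-- Partial derivative `∂ⱼ f` of a scalar function on `ℝ³`. -/
noncomputable def pd (j : Fin 3) (f : (Fin 3 → ℝ) → ℝ) (x : Fin 3 → ℝ) : ℝ :=
  fderiv ℝ f x (Pi.single j 1)

/-- Cross product on `ℝ³`. -/
def cross (a b : Fin 3 → ℝ) : Fin 3 → ℝ :=
  ![a 1 * b 2 - a 2 * b 1, a 2 * b 0 - a 0 * b 2, a 0 * b 1 - a 1 * b 0]

/-- Curl of a vector field on `ℝ³`. -/
noncomputable def curl (v : (Fin 3 → ℝ) → Fin 3 → ℝ) (x : Fin 3 → ℝ) : Fin 3 → ℝ :=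
  ![pd 1 (fun y => v y 2) x - pd 2 (fun y => v y 1) x,
    pd 2 (fun y => v y 0) x - pd 0 (fun y => v y 2) x,
    pd 0 (fun y => v y 1) x - pd 1 (fun y => v y 0) x]

noncomputable def grad (P : (Fin 3 → ℝ) → ℝ) (x : Fin 3 → ℝ) : Fin 3 → ℝ := fun i => pd i P x

noncomputable def divergence (v : (Fin 3 → ℝ) → Fin 3 → ℝ) (x : Fin 3 → ℝ) : ℝ :=
  ∑ i, pd i (fun y => v y i) x

noncomputable def dirDeriv (w v : (Fin 3 → ℝ) → Fin 3 → ℝ) (x : Fin 3 → ℝ) (i : Fin 3) : ℝ :=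
  ∑ j, w x j * pd j (fun y => v y i) x

section

variable {f g : (Fin 3 → ℝ) → ℝ} {x : Fin 3 → ℝ}

lemma pd_sub (hf : DifferentiableAt ℝ f x) (hg : DifferentiableAt ℝ g x) (j : Fin 3) :
    pd j (fun y => f y - g y) x = pd j f x - pd j g x := by
  rw [pd, pd, pd, fderiv_fun_sub hf hg]
  rfl

lemma pd_mul (hf : DifferentiableAt ℝ f x) (hg : DifferentiableAt ℝ g x) (j : Fin 3) :
    pd j (fun y => f y * g y) x = pd j f x * g x + f x * pd j g x := by
  rw [pd, pd, pd, fderiv_fun_mul hf hg]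
  simp only [add_apply, FunLike.coe_smul, Pi.smul_apply, smul_eq_mul]
  ring

lemma differentiableAt_pd (hf : ContDiffAt ℝ 2 f x) (j : Fin 3) :
    DifferentiableAt ℝ (pd j f) x :=
  ((hf.fderiv_right (m := 1) le_rfl).differentiableAt one_ne_zero).clm_apply
    (differentiableAt_const _)

lemma pd_pd_comm (hf : ContDiffAt ℝ 2 f x) (i j : Fin 3) :
    pd i (pd j f) x = pd j (pd i f) x := by
  have hdf := (hf.fderiv_right (m := 1) le_rfl).differentiableAt one_ne_zero
  have hpd : ∀ a, fderiv ℝ (pd a f) x = (fderiv ℝ (fderiv ℝ f) x).flip (Pi.single a 1) := by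
    intro a
    show fderiv ℝ (fun y => fderiv ℝ f y (Pi.single a 1)) x = _
    simpa using fderiv_clm_apply (u := fun _ => (Pi.single a 1 : Fin 3 → ℝ)) hdf
      (differentiableAt_const _)
  simp only [pd, hpd]
  exact (hf.isSymmSndFDerivAt (by simp)) _ _

end

section

variable {v a b : (Fin 3 → ℝ) → Fin 3 → ℝ} {x : Fin 3 → ℝ}

lemma curl_grad {P : (Fin 3 → ℝ) → ℝ} (hP : ContDiffAt ℝ 2 P x) : curl (grad P) x = 0 := by
  ext i
  fin_cases i <;> simp [curl, grad, pd_pd_comm hP]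

lemma divergence_curl (hv : ContDiffAt ℝ 2 v x) : divergence (curl v) x = 0 := by
  have hvk k : ContDiffAt ℝ 2 (fun y => v y k) x := contDiffAt_pi.1 hv k
  have hd j k := differentiableAt_pd (hvk k) j
  simp only [divergence, curl, Fin.sum_univ_three, Fin.isValue, Matrix.cons_val_zero,
    Matrix.cons_val_one, Matrix.cons_val_two, Matrix.head_cons, Matrix.tail_cons, pd_sub, hd,
    pd_pd_comm (hvk _)]
  ring

lemma differentiableAt_curl (hv : ContDiffAt ℝ 2 v x) : DifferentiableAt ℝ (curl v) x := by
  have hd j k := differentiableAt_pd (contDiffAt_pi.1 hv k) j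
  refine differentiableAt_pi.2 fun i => ?_
  fin_cases i <;>
  · simp only [curl, Fin.zero_eta, Fin.mk_one, Fin.reduceFinMk, Fin.isValue, Matrix.cons_val_zero,
      Matrix.cons_val_one, Matrix.cons_val_two, Matrix.head_cons, Matrix.tail_cons]
    exact (hd _ _).sub (hd _ _)

lemma curl_cross (ha : DifferentiableAt ℝ a x) (hb : DifferentiableAt ℝ b x) (i : Fin 3) :
    curl (fun y => cross (a y) (b y)) x i
      = a x i * divergence b x - b x i * divergence a x + dirDeriv b a x i - dirDeriv a b x i := by
  have hak := differentiableAt_pi.1 ha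
  have hbk := differentiableAt_pi.1 hb
  fin_cases i <;>
  · simp only [curl, cross, divergence, dirDeriv, Fin.sum_univ_three, Fin.zero_eta, Fin.mk_one,
      Fin.reduceFinMk, Fin.isValue, Matrix.cons_val_zero, Matrix.cons_val_one, Matrix.cons_val_two,
      Matrix.head_cons, Matrix.tail_cons]
    simp only [pd_sub, pd_mul, hak, hbk, DifferentiableAt.fun_mul]
    ring

end

/-- if `v` is a `C²` divergence-free field and `v × curl v = ∇P` for some `C²`
function `P`, then the Lie bracket `[curl v, v] = (curl v·∇)v − (v·∇)(curl v)` vanishes. -/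
theorem stmt2 (v : (Fin 3 → ℝ) → Fin 3 → ℝ) (hv : ContDiff ℝ 2 v)
    (hdiv : ∀ x, (∑ i, pd i (fun y => v y i) x) = 0)
    (P : (Fin 3 → ℝ) → ℝ) (hPsmooth : ContDiff ℝ 2 P)
    (hbernoulli : ∀ x i, cross (v x) (curl v x) i = pd i P x) :
    ∀ x i, (∑ j, curl v x j * pd j (fun y => v y i) x)
      - (∑ j, v x j * pd j (fun y => curl v y i) x) = 0 := by
  intro x i
  have hvx : ContDiffAt ℝ 2 v x := hv.contDiffAt
  have hgrad : (fun y => cross (v y) (curl v y)) = grad P :=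
    funext fun y => funext (hbernoulli y)
  have hcurl := curl_cross (hvx.differentiableAt (by norm_num)) (differentiableAt_curl hvx) i
  rw [hgrad, curl_grad hPsmooth.contDiffAt, divergence_curl hvx,
    show divergence v x = 0 from hdiv x, Pi.zero_apply] at hcurl
  change dirDeriv (curl v) v x i - dirDeriv v (curl v) x i = 0
  linear_combination -hcurl
end

section
/- Critical points of a σ₂-critical field are critical points of the induced Bernoulli function (flat-target instance): let φ = (φ₁,φ₂) : ℝ³ → ℝ² be a C² map and P̄ : ℝ² → ℝ a C¹ function such that τ_{σ₂}(φ)ₐ(x) = (∂ₐP̄)(φ(x)) for a = 1,2 and all x ∈ ℝ³. If x₀ ∈ ℝ³ is a critical point of φ, i.e. rank Dφ(x₀) ≤ 1, then ∇(P̄∘φ)(x₀) = 0. -/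
open scoped BigOperators

/-- Cauchy–Green tensor `Cᵢⱼ = Σₐ ∂ᵢφₐ ∂ⱼφₐ` of a map `φ : ℝ³ → ℝ²`. -/
noncomputable def CG (φ : Fin 2 → (Fin 3 → ℝ) → ℝ) (i j : Fin 3) (x : Fin 3 → ℝ) : ℝ :=
  ∑ a : Fin 2, pd i (φ a) x * pd j (φ a) x

/-- `|Dφ|² = Σ_{a,i} (∂ᵢφₐ)²`. -/
noncomputable def eDen (φ : Fin 2 → (Fin 3 → ℝ) → ℝ) (x : Fin 3 → ℝ) : ℝ :=
  ∑ a : Fin 2, ∑ i : Fin 3, (pd i (φ a) x) ^ 2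

/-- σ₂-tension field `τ_{σ₂}(φ)ₐ = Σⱼ ∂ⱼ(|Dφ|² ∂ⱼφₐ − Σᵢ Cᵢⱼ ∂ᵢφₐ)`. -/
noncomputable def tau2 (φ : Fin 2 → (Fin 3 → ℝ) → ℝ) (a : Fin 2) (x : Fin 3 → ℝ) : ℝ :=
  ∑ j : Fin 3,
    pd j (fun y => eDen φ y * pd j (φ a) y - ∑ i : Fin 3, CG φ i j y * pd i (φ a) y) x

/-- Jacobian matrix `Dφ(x)` of `φ : ℝ³ → ℝ²`. -/
noncomputable def Jac (φ : Fin 2 → (Fin 3 → ℝ) → ℝ) (x : Fin 3 → ℝ) : Matrix (Fin 2) (Fin 3) ℝ :=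
  Matrix.of fun a j => pd j (φ a) x

/-!
The σ₂-flux `|Dφ|² ∂ⱼφₐ − Σᵢ Cᵢⱼ ∂ᵢφₐ` equals `± Σᵢ ∂ᵢφ_b Mⱼᵢ` (`b ≠ a`), where
`Mᵢⱼ = ∂ᵢφ₀ ∂ⱼφ₁ − ∂ⱼφ₀ ∂ᵢφ₁` are the `2 × 2` minors of `Dφ`. All minors vanish where
`rank Dφ ≤ 1`, so there only the derivatives of the minors survive in `τ_{σ₂}`, and the chain rule
gives `∂ₖ(P̄ ∘ φ) = Σₐ ∂ₖφₐ τₐ = Σᵢⱼ Mₖᵢ ∂ⱼMⱼᵢ = 0`.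
-/

theorem Matrix.mul_eq_mul_of_rank_le_one {R n : Type*} [Field R] [Fintype n]
    (A : Matrix (Fin 2) n R) (hA : A.rank ≤ 1) (i j : n) :
    A 0 i * A 1 j = A 0 j * A 1 i := by
  have hdep : ¬ LinearIndependent R A.row := fun h => by
    have := h.rank_matrix
    simp only [Fintype.card_fin] at this
    omega
  rw [Fintype.linearIndependent_iff] at hdep
  push Not at hdep
  obtain ⟨g, hg, b, hb⟩ := hdep
  have hrow : ∀ k, g 0 * A 0 k + g 1 * A 1 k = 0 := fun k => by
    simpa [Fin.sum_univ_two] using congrFun hg k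
  have h0 : g 0 * (A 0 i * A 1 j - A 0 j * A 1 i) = 0 := by
    linear_combination A 1 j * hrow i - A 1 i * hrow j
  have h1 : g 1 * (A 0 i * A 1 j - A 0 j * A 1 i) = 0 := by
    linear_combination A 0 i * hrow j - A 0 j * hrow i
  fin_cases b
  · exact sub_eq_zero.mp ((mul_eq_zero.mp h0).resolve_left hb)
  · exact sub_eq_zero.mp ((mul_eq_zero.mp h1).resolve_left hb)

theorem HasFDerivAt.sum_mul_of_eq_zero {𝕜 E ι : Type*} [NontriviallyNormedField 𝕜]
    [NormedAddCommGroup E] [NormedSpace 𝕜 E] {s : Finset ι} {f g : ι → E → 𝕜}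
    {g' : ι → E →L[𝕜] 𝕜} {x : E} (hf : ∀ i ∈ s, DifferentiableAt 𝕜 (f i) x)
    (hg : ∀ i ∈ s, HasFDerivAt (g i) (g' i) x) (hg0 : ∀ i ∈ s, g i x = 0) :
    HasFDerivAt (fun y => ∑ i ∈ s, f i y * g i y) (∑ i ∈ s, f i x • g' i) x := by
  refine HasFDerivAt.fun_sum fun i hi => ?_
  simpa [hg0 i hi] using (hf i hi).hasFDerivAt.fun_smul (hg i hi)

theorem differentiable_pd {f : (Fin 3 → ℝ) → ℝ} (hf : ContDiff ℝ 2 f) (j : Fin 3) :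
    Differentiable ℝ (pd j f) :=
  ((hf.fderiv_right (m := 1) (by norm_num)).differentiable one_ne_zero).clm_apply
    (differentiable_const _)

theorem pd_sum_mul_of_eq_zero {ι : Type*} {s : Finset ι} {f g : ι → (Fin 3 → ℝ) → ℝ}
    {x : Fin 3 → ℝ} (hf : ∀ i ∈ s, DifferentiableAt ℝ (f i) x)
    (hg : ∀ i ∈ s, DifferentiableAt ℝ (g i) x) (hg0 : ∀ i ∈ s, g i x = 0) (j : Fin 3) :
    pd j (fun y => ∑ i ∈ s, f i y * g i y) x = ∑ i ∈ s, f i x * pd j (g i) x := by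
  rw [pd, (HasFDerivAt.sum_mul_of_eq_zero hf (fun i hi => (hg i hi).hasFDerivAt) hg0).fderiv]
  simp [pd]

theorem pd_comp {ι : Type*} [Fintype ι] [DecidableEq ι] {P : (ι → ℝ) → ℝ}
    {φ : ι → (Fin 3 → ℝ) → ℝ} {x : Fin 3 → ℝ} (hP : DifferentiableAt ℝ P (fun b => φ b x))
    (hφ : ∀ b, DifferentiableAt ℝ (φ b) x) (i : Fin 3) :
    pd i (fun y => P (fun b => φ b y)) x
      = ∑ a, pd i (φ a) x * fderiv ℝ P (fun b => φ b x) (Pi.single a 1) := by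
  have hΦ : HasFDerivAt (fun y b => φ b y) (ContinuousLinearMap.pi fun b => fderiv ℝ (φ b) x) x :=
    hasFDerivAt_pi.2 fun b => (hφ b).hasFDerivAt
  have hcomp : HasFDerivAt (fun y => P fun b => φ b y)
      ((fderiv ℝ P (fun b => φ b x)).comp (ContinuousLinearMap.pi fun b => fderiv ℝ (φ b) x)) x :=
    hP.hasFDerivAt.comp x hΦ
  rw [pd, hcomp.fderiv, ContinuousLinearMap.comp_apply, ← ContinuousLinearMap.coe_coe,
    LinearMap.pi_apply_eq_sum_univ]
  refine Finset.sum_congr rfl fun a _ => ?_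
  simp only [ContinuousLinearMap.coe_coe, ContinuousLinearMap.pi_apply, smul_eq_mul, pd]
  congr 2
  ext j
  simp [Pi.single_apply, eq_comm]

noncomputable def sigma2Flux (φ : Fin 2 → (Fin 3 → ℝ) → ℝ) (a : Fin 2) (j : Fin 3)
    (y : Fin 3 → ℝ) : ℝ :=
  eDen φ y * pd j (φ a) y - ∑ i, CG φ i j y * pd i (φ a) y

theorem tau2_eq_sum_pd_sigma2Flux (φ : Fin 2 → (Fin 3 → ℝ) → ℝ) (a : Fin 2) (x : Fin 3 → ℝ) :
    tau2 φ a x = ∑ j, pd j (sigma2Flux φ a j) x :=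
  rfl

noncomputable def jacMinor (φ : Fin 2 → (Fin 3 → ℝ) → ℝ) (i j : Fin 3) (x : Fin 3 → ℝ) : ℝ :=
  pd i (φ 0) x * pd j (φ 1) x - pd j (φ 0) x * pd i (φ 1) x

theorem jacMinor_eq_zero_of_rank_le_one {φ : Fin 2 → (Fin 3 → ℝ) → ℝ} {x : Fin 3 → ℝ}
    (h : (Jac φ x).rank ≤ 1) (i j : Fin 3) : jacMinor φ i j x = 0 :=
  sub_eq_zero.mpr ((Jac φ x).mul_eq_mul_of_rank_le_one h i j)

theorem differentiableAt_jacMinor {φ : Fin 2 → (Fin 3 → ℝ) → ℝ} {x : Fin 3 → ℝ}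
    (hφ : ∀ a i, DifferentiableAt ℝ (pd i (φ a)) x) (i j : Fin 3) :
    DifferentiableAt ℝ (jacMinor φ i j) x :=
  ((hφ 0 i).mul (hφ 1 j)).sub ((hφ 0 j).mul (hφ 1 i))

theorem sigma2Flux_zero (φ : Fin 2 → (Fin 3 → ℝ) → ℝ) (j : Fin 3) :
    sigma2Flux φ 0 j = fun y => ∑ i, pd i (φ 1) y * jacMinor φ j i y := by
  ext y
  simp only [sigma2Flux, eDen, CG, jacMinor, Fin.sum_univ_two, Fin.sum_univ_three]
  ring

theorem sigma2Flux_one (φ : Fin 2 → (Fin 3 → ℝ) → ℝ) (j : Fin 3) :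
    sigma2Flux φ 1 j = fun y => ∑ i, -pd i (φ 0) y * jacMinor φ j i y := by
  ext y
  simp only [sigma2Flux, eDen, CG, jacMinor, Fin.sum_univ_two, Fin.sum_univ_three]
  ring

section RankDeficient

variable {φ : Fin 2 → (Fin 3 → ℝ) → ℝ} {x : Fin 3 → ℝ}

theorem tau2_zero_eq_of_jacMinor_eq_zero (hφ : ∀ a i, DifferentiableAt ℝ (pd i (φ a)) x)
    (hM : ∀ i j, jacMinor φ i j x = 0) :
    tau2 φ 0 x = ∑ j, ∑ i, pd i (φ 1) x * pd j (jacMinor φ j i) x := by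
  simp only [tau2_eq_sum_pd_sigma2Flux, sigma2Flux_zero]
  exact Finset.sum_congr rfl fun j _ => pd_sum_mul_of_eq_zero (fun i _ => hφ 1 i)
    (fun i _ => differentiableAt_jacMinor hφ j i) (fun i _ => hM j i) j

theorem tau2_one_eq_of_jacMinor_eq_zero (hφ : ∀ a i, DifferentiableAt ℝ (pd i (φ a)) x)
    (hM : ∀ i j, jacMinor φ i j x = 0) :
    tau2 φ 1 x = ∑ j, ∑ i, -pd i (φ 0) x * pd j (jacMinor φ j i) x := by
  simp only [tau2_eq_sum_pd_sigma2Flux, sigma2Flux_one]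
  exact Finset.sum_congr rfl fun j _ => pd_sum_mul_of_eq_zero (fun i _ => (hφ 0 i).neg)
    (fun i _ => differentiableAt_jacMinor hφ j i) (fun i _ => hM j i) j

theorem sum_pd_mul_tau2_eq_zero_of_jacMinor_eq_zero
    (hφ : ∀ a i, DifferentiableAt ℝ (pd i (φ a)) x) (hM : ∀ i j, jacMinor φ i j x = 0)
    (k : Fin 3) : ∑ a, pd k (φ a) x * tau2 φ a x = 0 := by
  rw [Fin.sum_univ_two, tau2_zero_eq_of_jacMinor_eq_zero hφ hM,
    tau2_one_eq_of_jacMinor_eq_zero hφ hM, Finset.mul_sum, Finset.mul_sum,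
    ← Finset.sum_add_distrib]
  refine Finset.sum_eq_zero fun j _ => ?_
  rw [Finset.mul_sum, Finset.mul_sum, ← Finset.sum_add_distrib]
  refine Finset.sum_eq_zero fun i _ => ?_
  have hki := hM k i
  rw [jacMinor] at hki
  linear_combination pd j (jacMinor φ j i) x * hki

end RankDeficient

/-- if the `C²` map `φ : ℝ³ → ℝ²` is σ₂-critical with `C¹` potential `P̄` and
`x₀` is a critical point of `φ` (`rank Dφ(x₀) ≤ 1`), then `x₀` is a critical point of the
Bernoulli function `P̄∘φ`: `∇(P̄∘φ)(x₀) = 0`. -/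
theorem stmt8 (φ : Fin 2 → (Fin 3 → ℝ) → ℝ) (hφ : ∀ a, ContDiff ℝ 2 (φ a))
    (Pbar : (Fin 2 → ℝ) → ℝ) (hPbar : ContDiff ℝ 1 Pbar)
    (hcrit : ∀ (a : Fin 2) (x : Fin 3 → ℝ),
      tau2 φ a x = fderiv ℝ Pbar (fun b => φ b x) (Pi.single a 1))
    (x₀ : Fin 3 → ℝ) (hrank : (Jac φ x₀).rank ≤ 1) :
    ∀ i, pd i (fun y => Pbar (fun b => φ b y)) x₀ = 0 := by
  intro i
  rw [pd_comp (hPbar.differentiable one_ne_zero _)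
    fun b => (hφ b).differentiable two_ne_zero _]
  simp only [← hcrit]
  exact sum_pd_mul_tau2_eq_zero_of_jacMinor_eq_zero
    (fun a j => (differentiable_pd (hφ a) j).differentiableAt)
    (jacMinor_eq_zero_of_rank_le_one hrank) i
end

section
/- Fix an integer k ≥ 1. On ℝ⁴ set ρ₁(x) = x₁²+x₂², ρ₂(x) = x₃²+x₄², ξ(x) = (−x₂, x₁, −x₄, x₃), F(x) = k² (ρ₁(x) ρ₂(x))^{k−1} / (ρ₁(x)^k + ρ₂(x)^k)², and V(x) = F(x)·ξ(x). Then for every x ∈ ℝ⁴ \ {0}: (i) (DV)(x)(V(x)) = −F(x)²·x, which for |x| = 1 is orthogonal to the tangent space T_x S³, so the covariant derivative ∇_V V on the round sphere S³ vanishes; (ii) Σᵢ ∂ᵢVᵢ(x) = 0 and ⟨(DV)(x)(x), x⟩ = 0, so the tangential divergence of V on S³ vanishes. Hence V restricted to S³ is a steady incompressible Euler flow on the round S³ with zero pressure. -/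
open scoped BigOperators

/-- Partial derivative `∂ⱼ f` of a scalar function on `ℝ⁴`. -/
noncomputable def pd4 (j : Fin 4) (f : (Fin 4 → ℝ) → ℝ) (x : Fin 4 → ℝ) : ℝ :=
  fderiv ℝ f x (Pi.single j 1)

/-- `ρ₁(x) = x₁² + x₂²`. -/
def rho1 (x : Fin 4 → ℝ) : ℝ := (x 0) ^ 2 + (x 1) ^ 2

/-- `ρ₂(x) = x₃² + x₄²`. -/
def rho2 (x : Fin 4 → ℝ) : ℝ := (x 2) ^ 2 + (x 3) ^ 2

/-- The Hopf vector field `ξ(x) = (−x₂, x₁, −x₄, x₃)` on `ℝ⁴`. -/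
def xiH (x : Fin 4 → ℝ) : Fin 4 → ℝ := ![-(x 1), x 0, -(x 3), x 2]

/-- `F(x) = k² (ρ₁ρ₂)^{k−1} / (ρ₁^k + ρ₂^k)²`. -/
noncomputable def Fk (k : ℕ) (x : Fin 4 → ℝ) : ℝ :=
  (k : ℝ) ^ 2 * (rho1 x * rho2 x) ^ (k - 1) / (rho1 x ^ k + rho2 x ^ k) ^ 2

/-- `V = F·ξ`. -/
noncomputable def Vk (k : ℕ) (x : Fin 4 → ℝ) : Fin 4 → ℝ := fun i => Fk k x * xiH x i

/-!
`ξ` is the linear complex structure `J` of `ℝ⁴ = ℂ²`: it satisfies `J² = -1`, has zero diagonal,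
and `⟨J x, x⟩ = 0`. Since `ξ` generates the rotations `(e^{it} z₁, e^{it} z₂)`, the functions `ρ₁`,
`ρ₂`, and hence `F`, are constant along it: `DF(x)(ξ x) = 0`. The product rule
`DV(x)(v) = DF(x)(v) ξ(x) + F(x) ξ(v)` then gives `DV(x)(V x) = F² ξ(ξ x) = -F² x`,
`div V = DF(x)(ξ x) + F · tr ξ = 0` and `⟨DV(x)(x), x⟩ = (DF(x)(x) + F(x)) ⟨ξ x, x⟩ = 0`.
-/

open ContinuousLinearMap

lemma sum_apply_single_mul {ι R : Type*} [Fintype ι] [DecidableEq ι] [CommSemiring R]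
    [TopologicalSpace R] (L : (ι → R) →L[R] R) (v : ι → R) :
    ∑ i, L (Pi.single i 1) * v i = L v := by
  conv_rhs => rw [← Finset.univ_sum_single v, map_sum]
  refine Finset.sum_congr rfl fun i _ => ?_
  rw [mul_comm, ← smul_eq_mul, ← map_smul, ← Pi.single_smul', smul_eq_mul, mul_one]

def xiHLinear : (Fin 4 → ℝ) →ₗ[ℝ] (Fin 4 → ℝ) where
  toFun := xiH
  map_add' y z := by ext i; fin_cases i <;> simp [xiH] <;> ring
  map_smul' c y := by ext i; fin_cases i <;> simp [xiH]

lemma xiH_smul (c : ℝ) (y : Fin 4 → ℝ) : xiH (c • y) = c • xiH y := xiHLinear.map_smul c y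

lemma xiH_xiH (y : Fin 4 → ℝ) : xiH (xiH y) = -y := by
  ext i; fin_cases i <;> simp [xiH]

lemma sum_xiH_mul_self (y : Fin 4 → ℝ) : ∑ i, xiH y i * y i = 0 := by
  simp only [xiH, Fin.sum_univ_four, Matrix.cons_val_zero, Matrix.cons_val_one, Matrix.cons_val,
    neg_mul]
  ring

lemma sum_xiH_single_self : ∑ i, xiH (Pi.single i 1) i = 0 := by
  simp [xiH, Fin.sum_univ_four]

lemma Vk_eq_smul (k : ℕ) (x : Fin 4 → ℝ) : Vk k x = Fk k x • xiH x := rfl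

/-- `Fk k y = profileF k (rho1 y, rho2 y)` holds by `rfl`. -/
noncomputable def profileF (k : ℕ) (p : ℝ × ℝ) : ℝ :=
  (k : ℝ) ^ 2 * (p.1 * p.2) ^ (k - 1) / (p.1 ^ k + p.2 ^ k) ^ 2

lemma differentiableAt_profileF (k : ℕ) {p : ℝ × ℝ} (hp : p.1 ^ k + p.2 ^ k ≠ 0) :
    DifferentiableAt ℝ (profileF k) p := by
  unfold profileF
  fun_prop (disch := exact pow_ne_zero 2 hp)

section Derivatives

variable {x : Fin 4 → ℝ}

lemma hasFDerivAt_xiH_apply (i : Fin 4) :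
    HasFDerivAt (fun y => xiH y i) ((proj i).comp (LinearMap.toContinuousLinearMap xiHLinear)) x :=
  ((proj i).comp (LinearMap.toContinuousLinearMap xiHLinear)).hasFDerivAt

lemma hasFDerivAt_rho1 :
    HasFDerivAt rho1 ((2 * x 0) • proj (R := ℝ) 0 + (2 * x 1) • proj 1) x :=
  (((hasFDerivAt_apply (𝕜 := ℝ) 0 x).pow 2).add ((hasFDerivAt_apply 1 x).pow 2)).congr_fderiv
    (by ext v; simp)

lemma hasFDerivAt_rho2 :
    HasFDerivAt rho2 ((2 * x 2) • proj (R := ℝ) 2 + (2 * x 3) • proj 3) x :=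
  (((hasFDerivAt_apply (𝕜 := ℝ) 2 x).pow 2).add ((hasFDerivAt_apply 3 x).pow 2)).congr_fderiv
    (by ext v; simp)

lemma fderiv_comp_rho_xiH {G : ℝ × ℝ → ℝ} (hG : DifferentiableAt ℝ G (rho1 x, rho2 x)) :
    fderiv ℝ (fun y => G (rho1 y, rho2 y)) x (xiH x) = 0 := by
  have hρ := (hasFDerivAt_rho1 (x := x)).prodMk hasFDerivAt_rho2
  change fderiv ℝ (G ∘ fun y => (rho1 y, rho2 y)) x (xiH x) = 0
  rw [(hG.hasFDerivAt.comp x hρ).fderiv]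
  convert (fderiv ℝ G (rho1 x, rho2 x)).map_zero using 1
  simp only [comp_apply, prod_apply, add_apply, smul_apply, proj_apply, smul_eq_mul]
  congr 1
  ext <;> simp only [xiH, Matrix.cons_val_zero, Matrix.cons_val_one, Matrix.cons_val,
    Prod.fst_zero, Prod.snd_zero] <;> ring

lemma rho1_add_rho2_pos (hx : x ≠ 0) : 0 < rho1 x + rho2 x := by
  obtain ⟨i, hi⟩ := Function.ne_iff.mp hx
  replace hi : x i ≠ 0 := hi
  fin_cases i <;> simp only [rho1, rho2] <;> positivity

lemma rho1_pow_add_rho2_pow_pos (k : ℕ) (hx : x ≠ 0) : 0 < rho1 x ^ k + rho2 x ^ k := by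
  have h1 : 0 ≤ rho1 x := by unfold rho1; positivity
  have h2 : 0 ≤ rho2 x := by unfold rho2; positivity
  rcases h1.lt_or_eq with h1 | h1
  · exact add_pos_of_pos_of_nonneg (pow_pos h1 k) (pow_nonneg h2 k)
  · have h2 : 0 < rho2 x := by linarith [rho1_add_rho2_pos hx]
    exact add_pos_of_nonneg_of_pos (pow_nonneg h1.le k) (pow_pos h2 k)

lemma differentiableAt_profileF_rho (k : ℕ) (hx : x ≠ 0) :
    DifferentiableAt ℝ (profileF k) (rho1 x, rho2 x) :=
  differentiableAt_profileF k (rho1_pow_add_rho2_pow_pos k hx).ne'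

lemma differentiableAt_Fk (k : ℕ) (hx : x ≠ 0) : DifferentiableAt ℝ (Fk k) x :=
  (differentiableAt_profileF_rho k hx).comp (g := profileF k) x
    (hasFDerivAt_rho1.prodMk hasFDerivAt_rho2).differentiableAt

lemma fderiv_Fk_xiH (k : ℕ) (hx : x ≠ 0) : fderiv ℝ (Fk k) x (xiH x) = 0 :=
  fderiv_comp_rho_xiH (differentiableAt_profileF_rho k hx)

lemma fderiv_Vk_apply {k : ℕ} (hF : DifferentiableAt ℝ (Fk k) x) (i : Fin 4) (v : Fin 4 → ℝ) :
    fderiv ℝ (fun y => Vk k y i) x v = fderiv ℝ (Fk k) x v * xiH x i + Fk k x * xiH v i := by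
  have h : HasFDerivAt (fun y => Vk k y i) _ x := hF.hasFDerivAt.mul (hasFDerivAt_xiH_apply i)
  rw [h.fderiv]
  simp only [xiHLinear, add_apply, smul_apply, comp_apply, LinearMap.coe_toContinuousLinearMap',
    LinearMap.coe_mk, AddHom.coe_mk, proj_apply, smul_eq_mul]
  ring

end Derivatives

theorem stmt13_general (k : ℕ) :
    ∀ x : Fin 4 → ℝ, x ≠ 0 →
      (∀ i, fderiv ℝ (fun y => Vk k y i) x (Vk k x) = -(Fk k x) ^ 2 * x i) ∧
      ((∑ i, pd4 i (fun y => Vk k y i) x) = 0) ∧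
      ((∑ i, fderiv ℝ (fun y => Vk k y i) x x * x i) = 0) ∧
      ((∑ i, (x i) ^ 2) = 1 →
        ∀ u : Fin 4 → ℝ, (∑ i, u i * x i) = 0 →
          (∑ i, fderiv ℝ (fun y => Vk k y i) x (Vk k x) * u i) = 0) := by
  intro x hx
  have hDV := fderiv_Vk_apply (differentiableAt_Fk k hx)
  have hFξ := fderiv_Fk_xiH k hx
  have hVV : ∀ i, fderiv ℝ (fun y => Vk k y i) x (Vk k x) = -(Fk k x) ^ 2 * x i := by
    intro i
    rw [hDV, Vk_eq_smul, map_smul, hFξ, xiH_smul, xiH_xiH]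
    simp only [Pi.smul_apply, Pi.neg_apply, smul_eq_mul]
    ring
  refine ⟨hVV, ?_, ?_, fun _ u hu => ?_⟩
  · simp only [pd4, hDV, Finset.sum_add_distrib, ← Finset.mul_sum, sum_apply_single_mul, hFξ,
      sum_xiH_single_self, mul_zero, add_zero]
  · simp only [hDV, add_mul, Finset.sum_add_distrib, mul_assoc, ← Finset.mul_sum,
      sum_xiH_mul_self, mul_zero, add_zero]
  · simp only [hVV, mul_assoc, mul_comm (x _), ← Finset.mul_sum, hu, mul_zero]

/-- for every integer `k ≥ 1` and every `x ∈ ℝ⁴ \ {0}`: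
(i) `(DV)(x)(V(x)) = −F(x)²·x`, which on the unit sphere is orthogonal to the tangent space
`T_xS³` (so the covariant derivative `∇_V V` on the round `S³` vanishes);
(ii) `Σᵢ ∂ᵢVᵢ(x) = 0` and `⟨(DV)(x)(x), x⟩ = 0` (so the tangential divergence of `V` on `S³`
vanishes). Hence `V|_{S³}` is a steady incompressible Euler flow on `S³` with zero pressure. -/
theorem stmt13 (k : ℕ) (hk : 1 ≤ k) :
    ∀ x : Fin 4 → ℝ, x ≠ 0 →
      (∀ i, fderiv ℝ (fun y => Vk k y i) x (Vk k x) = -(Fk k x) ^ 2 * x i) ∧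
      ((∑ i, pd4 i (fun y => Vk k y i) x) = 0) ∧
      ((∑ i, fderiv ℝ (fun y => Vk k y i) x x * x i) = 0) ∧
      ((∑ i, (x i) ^ 2) = 1 →
        ∀ u : Fin 4 → ℝ, (∑ i, u i * x i) = 0 →
          (∑ i, fderiv ℝ (fun y => Vk k y i) x (Vk k x) * u i) = 0) :=
  stmt13_general k
end

section
/- Fix an integer k with |k| ≥ 1, and define h(t) = 1 + k^{−2} − 2k^{−2} t for t ∈ [0,1] and α(s) = arccos(2(1+k^{−2})cos²s − 2k^{−2}cos⁴s − 1) for s ∈ [0, π/2]. Then α(0) = 0, α(π/2) = π, α is differentiable on (0, π/2), and for every s ∈ (0, π/2) both equations hold: α′(s) sin α(s) = 2 sin(2s) h(cos²s) and α′(s) sin α(s) = −k² sin(2s) h(cos²s) h′(cos²s). -/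
open scoped Real
open Set Real

/-! With `c = k⁻²` and `u = cos² s`, the argument of `arccos` is the quadratic
`q(u) = profileArg c u = 2(1+c)u − 2cu² − 1`, which factors as `1 − q = 2(1−u)(1−cu)` and
`1 + q = 2u(1+c−cu)`; for `0 ≤ c ≤ 1` it therefore maps `(0,1)` into `(−1,1)`, and
`q(0) = −1`, `q(1) = 1` give the boundary values. Since `sin (arccos y) = √(1 − y²)` cancels the
derivative of `arccos`, `α′ sin α = −(q ∘ cos²)′ = 2 sin(2s) h(u)` because `q′ = 2h` and
`(cos²)′ = −sin 2s`. The second equation is the first one, as `h′ = −2c` and `k²c = 1`. -/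

theorem HasDerivAt.arccos {f : ℝ → ℝ} {f' x : ℝ} (hf : HasDerivAt f f' x)
    (h₁ : f x ≠ -1) (h₂ : f x ≠ 1) :
    HasDerivAt (fun y => Real.arccos (f y)) (-(1 / √(1 - f x ^ 2)) * f') x :=
  (hasDerivAt_arccos h₁ h₂).comp x hf

theorem deriv_arccos_comp_mul_sin_arccos {f : ℝ → ℝ} {f' x : ℝ} (hf : HasDerivAt f f' x)
    (h₁ : -1 < f x) (h₂ : f x < 1) :
    deriv (fun y => Real.arccos (f y)) x * sin (Real.arccos (f x)) = -f' := by
  have hsqrt : 0 < √(1 - f x ^ 2) := sqrt_pos.mpr (by nlinarith)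
  rw [(hf.arccos h₁.ne' h₂.ne).deriv, sin_arccos]
  field_simp

theorem hasDerivAt_cos_sq (s : ℝ) : HasDerivAt (fun s => cos s ^ 2) (-sin (2 * s)) s :=
  ((hasDerivAt_cos s).pow 2).congr_deriv (by rw [sin_two_mul]; ring)

theorem cos_sq_mem_Ioo {s : ℝ} (hs : s ∈ Ioo 0 (π / 2)) : cos s ^ 2 ∈ Ioo 0 1 := by
  obtain ⟨hs₀, hs₁⟩ := hs
  have hcos : 0 < cos s := cos_pos_of_mem_Ioo ⟨by linarith [pi_pos], hs₁⟩
  have hsin : 0 < sin s := sin_pos_of_pos_of_lt_pi hs₀ (by linarith [pi_pos])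
  constructor
  · positivity
  · nlinarith [sin_sq_add_cos_sq s]

namespace AlphaHopf

def profileArg (c u : ℝ) : ℝ := 2 * (1 + c) * u - 2 * c * u ^ 2 - 1

theorem profileArg_zero (c : ℝ) : profileArg c 0 = -1 := by
  simp [profileArg]

theorem profileArg_one (c : ℝ) : profileArg c 1 = 1 := by
  rw [profileArg]
  ring

theorem profileArg_mem_Ioo {c u : ℝ} (hc₀ : 0 ≤ c) (hc₁ : c ≤ 1) (hu : u ∈ Ioo 0 1) :
    profileArg c u ∈ Ioo (-1) 1 := by
  obtain ⟨hu₀, hu₁⟩ := hu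
  have hcu : c * u < 1 := by nlinarith
  have h_add : profileArg c u + 1 = 2 * u * (1 + c - c * u) := by rw [profileArg]; ring
  have h_sub : 1 - profileArg c u = 2 * (1 - u) * (1 - c * u) := by rw [profileArg]; ring
  constructor
  · nlinarith [mul_pos hu₀ (show 0 < 1 + c - c * u by nlinarith)]
  · nlinarith [mul_pos (sub_pos.mpr hu₁) (sub_pos.mpr hcu)]

theorem hasDerivAt_profileArg (c u : ℝ) :
    HasDerivAt (profileArg c) (2 * (1 + c) - 4 * c * u) u :=
  ((((hasDerivAt_id' u).const_mul (2 * (1 + c))).sub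
    ((hasDerivAt_pow 2 u).const_mul (2 * c))).sub_const 1).congr_deriv (by ring)

theorem hasDerivAt_profileArg_cos_sq (c s : ℝ) :
    HasDerivAt (fun s => profileArg c (cos s ^ 2))
      (-((2 * (1 + c) - 4 * c * cos s ^ 2) * sin (2 * s))) s :=
  ((hasDerivAt_profileArg c _).comp s (hasDerivAt_cos_sq s)).congr_deriv (by ring)

theorem deriv_arccos_profileArg_mul_sin {c s : ℝ} (hc₀ : 0 ≤ c) (hc₁ : c ≤ 1)
    (hs : s ∈ Ioo 0 (π / 2)) :
    deriv (fun s => arccos (profileArg c (cos s ^ 2))) s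
        * sin (arccos (profileArg c (cos s ^ 2)))
      = 2 * sin (2 * s) * (1 + c - 2 * c * cos s ^ 2) := by
  obtain ⟨h₁, h₂⟩ := profileArg_mem_Ioo hc₀ hc₁ (cos_sq_mem_Ioo hs)
  rw [deriv_arccos_comp_mul_sin_arccos (hasDerivAt_profileArg_cos_sq c s) h₁ h₂]
  ring

end AlphaHopf

open AlphaHopf

/-- for an integer `k` with `|k| ≥ 1`, with `h(t) = 1 + k⁻² − 2k⁻²t` and
`α(s) = arccos(2(1+k⁻²)cos²s − 2k⁻²cos⁴s − 1)`, one has `α(0) = 0`, `α(π/2) = π`, `α` is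
differentiable on `(0, π/2)`, and on `(0, π/2)` both profile equations hold:
`α′(s) sin α(s) = 2 sin(2s) h(cos²s)` and `α′(s) sin α(s) = −k² sin(2s) h(cos²s) h′(cos²s)`. -/
theorem stmt14 (k : ℤ) (hk : 1 ≤ |k|)
    (h : ℝ → ℝ) (hh : h = fun t => 1 + ((k : ℝ) ^ 2)⁻¹ - 2 * ((k : ℝ) ^ 2)⁻¹ * t)
    (α : ℝ → ℝ)
    (hα : α = fun s => Real.arccos
      (2 * (1 + ((k : ℝ) ^ 2)⁻¹) * Real.cos s ^ 2
        - 2 * ((k : ℝ) ^ 2)⁻¹ * Real.cos s ^ 4 - 1)) :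
    α 0 = 0 ∧ α (π / 2) = π ∧
    (∀ s ∈ Ioo 0 (π / 2), DifferentiableAt ℝ α s) ∧
    (∀ s ∈ Ioo 0 (π / 2),
      deriv α s * Real.sin (α s) = 2 * Real.sin (2 * s) * h (Real.cos s ^ 2) ∧
      deriv α s * Real.sin (α s)
        = -(k : ℝ) ^ 2 * Real.sin (2 * s) * h (Real.cos s ^ 2)
            * deriv h (Real.cos s ^ 2)) := by
  subst hh
  set c : ℝ := ((k : ℝ) ^ 2)⁻¹
  have hk₂ : (1 : ℝ) ≤ (k : ℝ) ^ 2 := mod_cast (one_le_sq_iff_one_le_abs _).mpr hk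
  have hc₀ : 0 ≤ c := by positivity
  have hc₁ : c ≤ 1 := inv_le_one_of_one_le₀ hk₂
  have hkc : (k : ℝ) ^ 2 * c = 1 := mul_inv_cancel₀ (by positivity)
  clear_value c
  replace hα : α = fun s => arccos (profileArg c (cos s ^ 2)) := by
    rw [hα]
    funext s
    rw [profileArg]
    ring_nf
  subst hα
  have hh' (u : ℝ) : deriv (fun t => 1 + c - 2 * c * t) u = -(2 * c) := by simp
  simp only [hh']
  refine ⟨by simp [profileArg_one], by simp [profileArg_zero],
    fun s hs => ?_, fun s hs => ?_⟩
  · obtain ⟨h₁, h₂⟩ := profileArg_mem_Ioo hc₀ hc₁ (cos_sq_mem_Ioo hs)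
    exact ((hasDerivAt_profileArg_cos_sq c s).arccos h₁.ne' h₂.ne).differentiableAt
  · rw [deriv_arccos_profileArg_mul_sin hc₀ hc₁ hs]
    constructor
    · ring
    · linear_combination (-2 * sin (2 * s) * (1 + c - 2 * c * cos s ^ 2)) * hkc
end
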